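/- arXiv:2505.04047 — 3 statements merged into one kernel-verified Lean document; each statement's English description precedes it below -/
import Mathlib

section
/- (Kantorovich-type step bound) Let A be SPD with eigenvalues in [λₙ, λ₁], κ = λ₁/λₙ, g ≠ 0, θ = (gᵀg)/(gᵀAg) the minimal-gradient step, and ω ∈ (0,2). Then ‖g − ωθAg‖²_{A⁻¹} ≤ (1 − ω(2−ω)·4κ/(κ+1)²)·‖g‖²_{A⁻¹}. -/
/-! Writing `a = gᵀAg`, `b = gᵀg`, `c = gᵀA⁻¹g`, the left side is `c - ω(2-ω) b²/a`, so the claim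
is the Kantorovich inequality `4 λₙ λ₁ a c ≤ (λₙ + λ₁)² b²`. By AM-GM this follows from
`gᵀ(A + λₙλ₁ A⁻¹)g ≤ (λₙ + λ₁) gᵀg`, which is the functional calculus applied to the scalar
inequality `x + λₙλ₁/x ≤ λₙ + λ₁` on `[λₙ, λ₁]`. -/

open Matrix

section
variable {A : Type*} [Ring A] [StarRing A] [PartialOrder A] [StarOrderedRing A] [Algebra ℝ A]
  [TopologicalSpace A] [ContinuousFunctionalCalculus ℝ A IsSelfAdjoint] [NonnegSpectrumClass ℝ A]

theorem IsSelfAdjoint.add_smul_ringInverse_le {a : A} (ha : IsSelfAdjoint a) {m M : ℝ}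
    (hm : 0 < m) (hspec : spectrum ℝ a ⊆ Set.Icc m M) :
    a + (m * M) • Ring.inverse a ≤ algebraMap ℝ A (m + M) := by
  have hne : ∀ x ∈ spectrum ℝ a, x ≠ 0 := fun x hx => ((hspec hx).1.trans_lt' hm).ne'
  have hunit : IsUnit a := spectrum.isUnit_of_zero_notMem ℝ fun h => hne 0 h rfl
  have hcfc : a + (m * M) • Ring.inverse a = cfc (fun x : ℝ => x + m * M * x⁻¹) a := by
    rw [← cfc_ringInverse_id (R := ℝ) a hunit, cfc_add .., cfc_const_mul .., cfc_id' ℝ a]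
  rw [hcfc, cfc_le_algebraMap_iff _ _ _]
  intro x hx
  obtain ⟨hmx, hxM⟩ := hspec hx
  have hx0 : 0 < x := hm.trans_le hmx
  have hdiff : m + M - (x + m * M * x⁻¹) = (x - m) * (M - x) / x := by field_simp; ring
  have hprod : 0 ≤ (x - m) * (M - x) / x :=
    div_nonneg (mul_nonneg (sub_nonneg.2 hmx) (sub_nonneg.2 hxM)) hx0.le
  linarith
end

namespace Matrix
open scoped MatrixOrder
variable {ι : Type*} [Fintype ι]

theorem le_iff_dotProduct_mulVec_le {A B : Matrix ι ι ℝ} (hA : A.IsHermitian)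
    (hB : B.IsHermitian) : A ≤ B ↔ ∀ v : ι → ℝ, v ⬝ᵥ (A *ᵥ v) ≤ v ⬝ᵥ (B *ᵥ v) := by
  simp only [le_iff, posSemidef_iff_dotProduct_mulVec, hB.sub hA, true_and, star_trivial,
    sub_mulVec, dotProduct_sub, sub_nonneg]

theorem isHermitian_algebraMap [DecidableEq ι] (r : ℝ) :
    (algebraMap ℝ (Matrix ι ι ℝ) r).IsHermitian :=
  (IsSelfAdjoint.all r).algebraMap _

theorem IsHermitian.spectrum_subset_Icc [DecidableEq ι] {A : Matrix ι ι ℝ} (hA : A.IsHermitian)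
    {m M : ℝ}
    (hspec : ∀ v : ι → ℝ, m * (v ⬝ᵥ v) ≤ v ⬝ᵥ (A *ᵥ v) ∧ v ⬝ᵥ (A *ᵥ v) ≤ M * (v ⬝ᵥ v)) :
    spectrum ℝ A ⊆ Set.Icc m M := by
  have hlow : algebraMap ℝ _ m ≤ A := by
    rw [le_iff_dotProduct_mulVec_le (isHermitian_algebraMap m) hA]
    intro v
    simpa [Algebra.algebraMap_eq_smul_one, smul_mulVec] using (hspec v).1
  have hup : A ≤ algebraMap ℝ _ M := by
    rw [le_iff_dotProduct_mulVec_le hA (isHermitian_algebraMap M)]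
    intro v
    simpa [Algebra.algebraMap_eq_smul_one, smul_mulVec] using (hspec v).2
  intro x hx
  exact ⟨(algebraMap_le_iff_le_spectrum (a := A)).1 hlow x hx,
    (le_algebraMap_iff_spectrum_le (a := A)).1 hup x hx⟩

theorem PosDef.dotProduct_mulVec_add_mul_inv_le [DecidableEq ι] {A : Matrix ι ι ℝ}
    (hA : A.PosDef) {m M : ℝ} (hm : 0 < m) (hspec : spectrum ℝ A ⊆ Set.Icc m M) (v : ι → ℝ) :
    v ⬝ᵥ (A *ᵥ v) + m * M * (v ⬝ᵥ (A⁻¹ *ᵥ v)) ≤ (m + M) * (v ⬝ᵥ v) := by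
  have hle := IsSelfAdjoint.add_smul_ringInverse_le (a := A) hA.isHermitian hm hspec
  rw [← nonsing_inv_eq_ringInverse, le_iff_dotProduct_mulVec_le
    (hA.isHermitian.add (hA.inv.isHermitian.smul (IsSelfAdjoint.all _)))
    (isHermitian_algebraMap _)] at hle
  simpa [Algebra.algebraMap_eq_smul_one, add_mulVec, smul_mulVec] using hle v

theorem PosDef.kantorovich [DecidableEq ι] {A : Matrix ι ι ℝ} (hA : A.PosDef) {m M : ℝ}
    (hm : 0 < m) (hmM : m ≤ M) (hspec : spectrum ℝ A ⊆ Set.Icc m M) (v : ι → ℝ) :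
    4 * m * M * ((v ⬝ᵥ (A *ᵥ v)) * (v ⬝ᵥ (A⁻¹ *ᵥ v))) ≤ ((m + M) * (v ⬝ᵥ v)) ^ 2 := by
  set a := v ⬝ᵥ (A *ᵥ v)
  set c := v ⬝ᵥ (A⁻¹ *ᵥ v)
  have ha : 0 ≤ a := by simpa using hA.posSemidef.dotProduct_mulVec_nonneg v
  have hc : 0 ≤ c := by simpa using hA.inv.posSemidef.dotProduct_mulVec_nonneg v
  have hmMc : 0 ≤ m * M * c := by have := hm.trans_le hmM; positivity
  calc 4 * m * M * (a * c) ≤ (a + m * M * c) ^ 2 := by nlinarith [sq_nonneg (a - m * M * c)]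
    _ ≤ ((m + M) * (v ⬝ᵥ v)) ^ 2 := by
      gcongr
      exact hA.dotProduct_mulVec_add_mul_inv_le hm hspec v

theorem dotProduct_inv_mulVec_sub_smul_mulVec {R : Type*} [CommRing R] [DecidableEq ι]
    {A : Matrix ι ι R} (hA : A.IsSymm) (hdet : IsUnit A.det) (g : ι → R) (t : R) :
    (g - t • (A *ᵥ g)) ⬝ᵥ (A⁻¹ *ᵥ (g - t • (A *ᵥ g))) =
      g ⬝ᵥ (A⁻¹ *ᵥ g) - 2 * t * (g ⬝ᵥ g) + t ^ 2 * (g ⬝ᵥ (A *ᵥ g)) := by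
  have hinv : A⁻¹ *ᵥ (A *ᵥ g) = g := by rw [mulVec_mulVec, nonsing_inv_mul A hdet, one_mulVec]
  have hcross : (A *ᵥ g) ⬝ᵥ (A⁻¹ *ᵥ g) = g ⬝ᵥ g := by
    rw [dotProduct_comm, dotProduct_mulVec, ← mulVec_transpose, hA.eq, mulVec_mulVec,
      mul_nonsing_inv A hdet, one_mulVec]
  rw [mulVec_sub, mulVec_smul, hinv]
  simp only [sub_dotProduct, dotProduct_sub, smul_dotProduct, dotProduct_smul, smul_eq_mul,
    hcross, dotProduct_comm (A *ᵥ g) g]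
  ring
end Matrix

/-- Kantorovich-type step bound: A SPD with spectrum in [λₙ, λ₁],
κ = λ₁/λₙ, g ≠ 0, θ = (gᵀg)/(gᵀAg), ω ∈ (0,2). Then
‖g − ωθAg‖²_{A⁻¹} ≤ (1 − ω(2−ω)·4κ/(κ+1)²)·‖g‖²_{A⁻¹}. -/
theorem stmt7 (n : ℕ) (A : Matrix (Fin n) (Fin n) ℝ) (hA : A.PosDef)
    (lam1 lamn : ℝ) (hlamn : 0 < lamn) (hle : lamn ≤ lam1)
    (hspec : ∀ v : Fin n → ℝ, lamn * (v ⬝ᵥ v) ≤ v ⬝ᵥ (A *ᵥ v) ∧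
      v ⬝ᵥ (A *ᵥ v) ≤ lam1 * (v ⬝ᵥ v))
    (κ : ℝ) (hκ : κ = lam1 / lamn)
    (g : Fin n → ℝ) (hg : g ≠ 0)
    (θ : ℝ) (hθ : θ = (g ⬝ᵥ g) / (g ⬝ᵥ (A *ᵥ g)))
    (ω : ℝ) (hω0 : 0 < ω) (hω2 : ω < 2) :
    (g - (ω * θ) • (A *ᵥ g)) ⬝ᵥ (A⁻¹ *ᵥ (g - (ω * θ) • (A *ᵥ g))) ≤
      (1 - ω * (2 - ω) * (4 * κ) / (κ + 1) ^ 2) * (g ⬝ᵥ (A⁻¹ *ᵥ g)) := by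
  set a := g ⬝ᵥ (A *ᵥ g)
  set b := g ⬝ᵥ g
  set c := g ⬝ᵥ (A⁻¹ *ᵥ g)
  have ha : 0 < a := by simpa using hA.dotProduct_mulVec_pos hg
  have hK := hA.kantorovich hlamn hle (hA.isHermitian.spectrum_subset_Icc hspec) g
  have hlam1 : 0 < lam1 := hlamn.trans_le hle
  have hKdiv : 4 * lamn * lam1 / (lamn + lam1) ^ 2 * c ≤ b ^ 2 / a := by
    rw [div_mul_eq_mul_div, div_le_div_iff₀ (by positivity) ha]
    linarith
  have hω : 0 ≤ ω * (2 - ω) := mul_nonneg hω0.le (by linarith)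
  rw [dotProduct_inv_mulVec_sub_smul_mulVec (isHermitian_iff_isSymm.1 hA.isHermitian)
    hA.det_pos.ne'.isUnit g]
  calc c - 2 * (ω * θ) * b + (ω * θ) ^ 2 * a = c - ω * (2 - ω) * (b ^ 2 / a) := by
        rw [hθ]; field_simp; ring
    _ ≤ c - ω * (2 - ω) * (4 * lamn * lam1 / (lamn + lam1) ^ 2 * c) := by gcongr
    _ = (1 - ω * (2 - ω) * (4 * κ) / (κ + 1) ^ 2) * c := by
        rw [hκ]; field_simp; ring
end

section
/- (Multi-direction step dominates single-direction step) Let B = A^{2ℓ−1} be SPD (A SPD, ℓ a half-integer), ω ∈ (0,2), g ∈ ℝⁿ nonzero, and let W ∈ ℝ^{n×m} have full column rank with g in the column space of W. Let a* = (WᵀA^{2ℓ+1}W)⁻¹WᵀA^{2ℓ}g and θ = (gᵀA^{2ℓ}g)/(gᵀA^{2ℓ+1}g). Then ‖g − ωAWa*‖²_{A^{2ℓ−1}} ≤ ‖g − ωθAg‖²_{A^{2ℓ−1}}. -/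
open Matrix

/-!
With `B = A ^ (p - 1)` and `⟪x, y⟫ = x ⬝ᵥ (B *ᵥ y)`, the normal equations for `a*` say that
`A W a*` is the `B`-orthogonal projection of `g` onto `A · col(W)`, and the choice of `θ` makes
`θ A g` the projection of `g` onto the line through `A g`, which lies in `A · col(W)`. For any
`B`-orthogonal projection `u` of `g` one has `‖g - ω u‖² = ‖g‖² - ω (2 - ω) ‖u‖²`, and projecting
onto a larger subspace can only increase `‖u‖`.
-/

lemma Matrix.IsSymm.dotProduct_mulVec_comm {ι R : Type*} [Fintype ι] [CommSemiring R]
    {B : Matrix ι ι R} (hB : B.IsSymm) (x y : ι → R) :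
    x ⬝ᵥ (B *ᵥ y) = y ⬝ᵥ (B *ᵥ x) := by
  rw [dotProduct_mulVec, ← mulVec_transpose, hB.eq, dotProduct_comm]

section Relaxation

variable {ι : Type*} [Fintype ι] {B : Matrix ι ι ℝ} {g u v : ι → ℝ}

lemma relaxed_residual_eq (hB : B.IsSymm) (hu : (g - u) ⬝ᵥ (B *ᵥ u) = 0) (ω : ℝ) :
    (g - ω • u) ⬝ᵥ (B *ᵥ (g - ω • u)) = g ⬝ᵥ (B *ᵥ g) - ω * (2 - ω) * (u ⬝ᵥ (B *ᵥ u)) := by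
  simp only [mulVec_sub, mulVec_smul, sub_dotProduct, dotProduct_sub, dotProduct_smul,
    smul_dotProduct, smul_eq_mul] at hu ⊢
  rw [hB.dotProduct_mulVec_comm u g]
  linear_combination (-2 * ω) * hu

lemma dotProduct_mulVec_le_of_orthogonal (hB : B.PosSemidef)
    (hv : (g - v) ⬝ᵥ (B *ᵥ v) = 0) (huv : (g - u) ⬝ᵥ (B *ᵥ v) = 0) :
    v ⬝ᵥ (B *ᵥ v) ≤ u ⬝ᵥ (B *ᵥ u) := by
  have hsymm : B.IsSymm := isHermitian_iff_isSymm.mp hB.isHermitian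
  have hnonneg : 0 ≤ (u - v) ⬝ᵥ (B *ᵥ (u - v)) := by
    simpa only [star_trivial] using hB.dotProduct_mulVec_nonneg (u - v)
  simp only [mulVec_sub, sub_dotProduct, dotProduct_sub] at hv huv hnonneg
  rw [hsymm.dotProduct_mulVec_comm v u] at hnonneg
  linarith

lemma relaxed_residual_le (hB : B.PosSemidef) {ω : ℝ} (hω0 : 0 ≤ ω) (hω2 : ω ≤ 2)
    (hu : (g - u) ⬝ᵥ (B *ᵥ u) = 0) (hv : (g - v) ⬝ᵥ (B *ᵥ v) = 0)
    (huv : (g - u) ⬝ᵥ (B *ᵥ v) = 0) :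
    (g - ω • u) ⬝ᵥ (B *ᵥ (g - ω • u)) ≤ (g - ω • v) ⬝ᵥ (B *ᵥ (g - ω • v)) := by
  have hsymm : B.IsSymm := isHermitian_iff_isSymm.mp hB.isHermitian
  rw [relaxed_residual_eq hsymm hu, relaxed_residual_eq hsymm hv]
  gcongr ?_ - ?_
  exact mul_le_mul_of_nonneg_left (dotProduct_mulVec_le_of_orthogonal hB hv huv)
    (mul_nonneg hω0 (sub_nonneg.mpr hω2))

lemma sub_smul_dotProduct_mulVec_smul_eq_zero (w : ι → ℝ) {θ : ℝ}
    (hθ : θ = g ⬝ᵥ (B *ᵥ w) / w ⬝ᵥ (B *ᵥ w)) :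
    (g - θ • w) ⬝ᵥ (B *ᵥ (θ • w)) = 0 := by
  simp only [mulVec_smul, sub_dotProduct, dotProduct_smul, smul_dotProduct, smul_eq_mul]
  rcases eq_or_ne (w ⬝ᵥ (B *ᵥ w)) 0 with hw | hw
  · simp [hθ, hw]
  · rw [hθ]
    field_simp
    ring

end Relaxation

section Galerkin

variable {n m : Type*} [Fintype n] [DecidableEq n] [Fintype m] {A : Matrix n n ℝ}

lemma zpow_natCast_sub_one_mulVec_mulVec (hA : IsUnit A.det) (p : ℕ) (y : n → ℝ) :
    A ^ ((p : ℤ) - 1) *ᵥ (A *ᵥ y) = A ^ p *ᵥ y := by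
  rw [mulVec_mulVec, ← zpow_add_one hA, sub_add_cancel, zpow_natCast]

lemma galerkin_residual_orthogonal (hA : A.IsSymm) (hAdet : IsUnit A.det) (p : ℕ)
    (W : Matrix n m ℝ) {g : n → ℝ} {a : m → ℝ}
    (ha : (Wᵀ * A ^ (p + 1) * W) *ᵥ a = (Wᵀ * A ^ p) *ᵥ g) (x : m → ℝ) :
    (g - A *ᵥ (W *ᵥ a)) ⬝ᵥ (A ^ ((p : ℤ) - 1) *ᵥ (A *ᵥ (W *ᵥ x))) = 0 := by
  have hWres : Wᵀ *ᵥ (A ^ p *ᵥ (g - A *ᵥ (W *ᵥ a))) = 0 := by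
    simp only [mulVec_sub, mulVec_mulVec, ← Matrix.mul_assoc, ← pow_succ]
    rw [ha, sub_self]
  rw [zpow_natCast_sub_one_mulVec_mulVec hAdet, (hA.pow p).dotProduct_mulVec_comm,
    dotProduct_comm, dotProduct_mulVec, ← mulVec_transpose, hWres, zero_dotProduct]

end Galerkin

theorem stmt9_general (n m : ℕ) (A : Matrix (Fin n) (Fin n) ℝ) (hA : A.PosDef)
    (p : ℕ) -- p = 2ℓ
    (ω : ℝ) (hω0 : 0 < ω) (hω2 : ω < 2)
    (g : Fin n → ℝ)
    (W : Matrix (Fin n) (Fin m) ℝ)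
    (hW : LinearIndependent ℝ (fun j : Fin m => Wᵀ j))
    (hgcol : ∃ c : Fin m → ℝ, W *ᵥ c = g)
    (astar : Fin m → ℝ)
    (hastar : astar = (Wᵀ * A ^ (p + 1) * W)⁻¹ *ᵥ ((Wᵀ * A ^ p) *ᵥ g))
    (θ : ℝ) (hθ : θ = (g ⬝ᵥ (A ^ p *ᵥ g)) / (g ⬝ᵥ (A ^ (p + 1) *ᵥ g))) :
    (g - ω • (A *ᵥ (W *ᵥ astar))) ⬝ᵥ (A ^ ((p : ℤ) - 1) *ᵥ (g - ω • (A *ᵥ (W *ᵥ astar)))) ≤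
      (g - (ω * θ) • (A *ᵥ g)) ⬝ᵥ (A ^ ((p : ℤ) - 1) *ᵥ (g - (ω * θ) • (A *ᵥ g))) := by
  obtain ⟨c, hc⟩ := hgcol
  have hAsymm : A.IsSymm := isHermitian_iff_isSymm.mp hA.isHermitian
  have hAdet : IsUnit A.det := (isUnit_iff_isUnit_det _).mp hA.isUnit
  have hGram : (Wᵀ * A ^ (p + 1) * W).PosDef := by
    have hApow : (A ^ (p + 1)).PosDef :=
      (hA.posSemidef.pow _).posDef_iff_isUnit.mpr (hA.isUnit.pow _)
    simpa only [conjTranspose_eq_transpose_of_trivial] using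
      hApow.conjTranspose_mul_mul_same (mulVec_injective_iff.mpr hW)
  have hnormal : (Wᵀ * A ^ (p + 1) * W) *ᵥ astar = (Wᵀ * A ^ p) *ᵥ g := by
    rw [hastar, mulVec_mulVec, mul_nonsing_inv _ ((isUnit_iff_isUnit_det _).mp hGram.isUnit),
      one_mulVec]
  have hθ' : θ = g ⬝ᵥ (A ^ ((p : ℤ) - 1) *ᵥ (A *ᵥ g)) /
      (A *ᵥ g) ⬝ᵥ (A ^ ((p : ℤ) - 1) *ᵥ (A *ᵥ g)) := by
    rw [hθ, zpow_natCast_sub_one_mulVec_mulVec hAdet, dotProduct_comm (A *ᵥ g),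
      ← hAsymm.dotProduct_mulVec_comm, mulVec_mulVec, ← pow_succ']
  have hθAg : θ • (A *ᵥ g) = A *ᵥ (W *ᵥ (θ • c)) := by rw [mulVec_smul, mulVec_smul, hc]
  rw [mul_smul]
  refine relaxed_residual_le (hA.posSemidef.zpow _) hω0.le hω2.le
    (galerkin_residual_orthogonal hAsymm hAdet p W hnormal astar)
    (sub_smul_dotProduct_mulVec_smul_eq_zero _ hθ') ?_
  rw [hθAg]
  exact galerkin_residual_orthogonal hAsymm hAdet p W hnormal _

/-- multi-direction step dominates single-direction step:
A SPD, p = 2ℓ, ω ∈ (0,2), g ≠ 0, W of full column rank with g ∈ col(W),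
a* = (WᵀA^{2ℓ+1}W)⁻¹WᵀA^{2ℓ}g, θ = (gᵀA^{2ℓ}g)/(gᵀA^{2ℓ+1}g). Then
‖g − ωAWa*‖²_{A^{2ℓ−1}} ≤ ‖g − ωθAg‖²_{A^{2ℓ−1}}. -/
theorem stmt9 (n m : ℕ) (A : Matrix (Fin n) (Fin n) ℝ) (hA : A.PosDef)
    (p : ℕ) -- p = 2ℓ
    (ω : ℝ) (hω0 : 0 < ω) (hω2 : ω < 2)
    (g : Fin n → ℝ) (hg : g ≠ 0)
    (W : Matrix (Fin n) (Fin m) ℝ)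
    (hW : LinearIndependent ℝ (fun j : Fin m => Wᵀ j))
    (hgcol : ∃ c : Fin m → ℝ, W *ᵥ c = g)
    (astar : Fin m → ℝ)
    (hastar : astar = (Wᵀ * A ^ (p + 1) * W)⁻¹ *ᵥ ((Wᵀ * A ^ p) *ᵥ g))
    (θ : ℝ) (hθ : θ = (g ⬝ᵥ (A ^ p *ᵥ g)) / (g ⬝ᵥ (A ^ (p + 1) *ᵥ g))) :
    (g - ω • (A *ᵥ (W *ᵥ astar))) ⬝ᵥ (A ^ ((p : ℤ) - 1) *ᵥ (g - ω • (A *ᵥ (W *ᵥ astar)))) ≤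
      (g - (ω * θ) • (A *ᵥ g)) ⬝ᵥ (A ^ ((p : ℤ) - 1) *ᵥ (g - (ω * θ) • (A *ᵥ g))) :=
  stmt9_general n m A hA p ω hω0 hω2 g W hW hgcol astar hastar θ hθ
end

section
/- (Linear convergence of the flexible scheme) Under the assumptions of the flexible scheme (A SPD, each W_k full rank with g_k ∈ col(W_k), a_k = (W_kᵀA^{2ℓ+1}W_k)⁻¹W_kᵀA^{2ℓ}g_k, ω ∈ (0,2), x_{k+1} = x_k − ωW_k a_k), the gradients satisfy ‖g_{k+1}‖²_{A^{2ℓ−1}} ≤ c(ω)‖g_k‖²_{A^{2ℓ−1}} for all k, where c(ω) = 1 − ω(2−ω)·4κ/(κ+1)² and κ is the condition number of A; hence ‖g_k‖²_{A^{2ℓ−1}} ≤ c(ω)^k ‖g_0‖²_{A^{2ℓ−1}}. -/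
/-!
Write `u = W a` and `‖v‖²_B = v ⬝ᵥ B v`. The coefficients `a` solve the normal equations
`Wᵀ A^(p+1) W a = Wᵀ A^p g`, so testing them against `a` and against a preimage of `g` gives
`⟨u, A^(p+1) u⟩ = ⟨u, A^p g⟩ =: S` and `⟨g, A^(p+1) u⟩ = ⟨g, A^p g⟩`. Hence one relaxed step
satisfies `‖g - ω A u‖²_{A^(p-1)} = ‖g‖²_{A^(p-1)} - ω (2 - ω) S`.

Cauchy–Schwarz for the form `A^(p+1)` gives `⟨g, A^p g⟩² ≤ ‖g‖²_{A^(p+1)} S`, and the Kantorovich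
inequality `4 λ₁ λₙ ‖g‖²_{A^(p-1)} ‖g‖²_{A^(p+1)} ≤ (λ₁ + λₙ)² ⟨g, A^p g⟩²` follows from
`A^(p-1) (A - λₙ) (λ₁ - A) ⪰ 0`, a product of commuting positive semidefinite matrices.
Together, `S ≥ 4κ/(κ+1)² ‖g‖²_{A^(p-1)}`.
-/

open Matrix

namespace Matrix

variable {ι m : Type*} [Fintype ι] [Fintype m]

lemma IsSymm.dotProduct_mulVec_comm_s10 {R : Type*} [CommSemiring R] {M : Matrix ι ι R}
    (hM : M.IsSymm) (x y : ι → R) : x ⬝ᵥ (M *ᵥ y) = y ⬝ᵥ (M *ᵥ x) := by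
  rw [dotProduct_mulVec, ← mulVec_transpose, hM.eq, dotProduct_comm]

lemma PosSemidef.dotProduct_mulVec_sq_le {M : Matrix ι ι ℝ} (hM : M.PosSemidef) (x y : ι → ℝ) :
    (x ⬝ᵥ (M *ᵥ y)) ^ 2 ≤ (x ⬝ᵥ (M *ᵥ x)) * (y ⬝ᵥ (M *ᵥ y)) := by
  have hsymm : M.IsSymm := isHermitian_iff_isSymm.1 hM.isHermitian
  have hdiscr := discrim_le_zero (K := ℝ) (a := y ⬝ᵥ (M *ᵥ y)) (b := 2 * (x ⬝ᵥ (M *ᵥ y)))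
    (c := x ⬝ᵥ (M *ᵥ x)) fun t => by
      have := hM.dotProduct_mulVec_nonneg (x + t • y)
      simp only [star_trivial, mulVec_add, mulVec_smul, add_dotProduct, dotProduct_add,
        smul_dotProduct, dotProduct_smul, smul_eq_mul, hsymm.dotProduct_mulVec_comm_s10 y x] at this
      linarith
  rw [discrim] at hdiscr
  linarith

lemma dotProduct_mulVec_of_normal_eq {M : Matrix ι ι ℝ} {W : Matrix ι m ℝ} {r : ι → ℝ}
    {a : m → ℝ} (ha : (Wᵀ * M * W) *ᵥ a = Wᵀ *ᵥ r) (c : m → ℝ) :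
    (W *ᵥ c) ⬝ᵥ (M *ᵥ (W *ᵥ a)) = (W *ᵥ c) ⬝ᵥ r := by
  have hadj : ∀ v, (W *ᵥ c) ⬝ᵥ v = c ⬝ᵥ (Wᵀ *ᵥ v) := fun v => by
    rw [dotProduct_comm, dotProduct_mulVec, dotProduct_comm, mulVec_transpose]
  rw [hadj, hadj, mulVec_mulVec, mulVec_mulVec, ha]

lemma PosDef.mulVec_normal_eq [DecidableEq m] {M : Matrix ι ι ℝ} (hM : M.PosDef)
    {W : Matrix ι m ℝ} (hW : Function.Injective W.mulVec) (r : ι → ℝ) :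
    (Wᵀ * M * W) *ᵥ ((Wᵀ * M * W)⁻¹ *ᵥ (Wᵀ *ᵥ r)) = Wᵀ *ᵥ r := by
  have hN : (Wᵀ * M * W).PosDef := by
    simpa [conjTranspose_eq_transpose_of_trivial] using hM.conjTranspose_mul_mul_same hW
  rw [mulVec_mulVec, mul_nonsing_inv _ (isUnit_iff_ne_zero.2 hN.det_pos.ne'), one_mulVec]

variable [DecidableEq ι]

lemma dotProduct_zpow_mulVec_sub_smul {A : Matrix ι ι ℝ} (hA : A.IsSymm)
    (hdet : IsUnit A.det) (q : ℤ) (ω : ℝ) (g u : ι → ℝ) :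
    (g - ω • (A *ᵥ u)) ⬝ᵥ (A ^ (q - 1) *ᵥ (g - ω • (A *ᵥ u))) =
      g ⬝ᵥ (A ^ (q - 1) *ᵥ g) - 2 * ω * (u ⬝ᵥ (A ^ q *ᵥ g)) +
        ω ^ 2 * (u ⬝ᵥ (A ^ (q + 1) *ᵥ u)) := by
  have hHA : A ^ (q - 1) * A = A ^ q := by rw [← zpow_add_one hdet, sub_add_cancel]
  have hAHA : A * A ^ (q - 1) * A = A ^ (q + 1) := by
    rw [(Commute.self_zpow A (q - 1)).eq, hHA, zpow_add_one hdet]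
  have hcross : g ⬝ᵥ (A ^ (q - 1) *ᵥ (A *ᵥ u)) = u ⬝ᵥ (A ^ q *ᵥ g) := by
    rw [mulVec_mulVec, hHA, (hA.zpow q).dotProduct_mulVec_comm_s10]
  have hcross' : (A *ᵥ u) ⬝ᵥ (A ^ (q - 1) *ᵥ g) = u ⬝ᵥ (A ^ q *ᵥ g) := by
    rw [(hA.zpow _).dotProduct_mulVec_comm_s10, hcross]
  have hsquare : (A *ᵥ u) ⬝ᵥ (A ^ (q - 1) *ᵥ (A *ᵥ u)) = u ⬝ᵥ (A ^ (q + 1) *ᵥ u) := by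
    rw [dotProduct_comm, hA.dotProduct_mulVec_comm_s10, mulVec_mulVec, mulVec_mulVec, hAHA]
  simp only [mulVec_sub, mulVec_smul, sub_dotProduct, dotProduct_sub, smul_dotProduct,
    dotProduct_smul, smul_eq_mul, hcross, hcross', hsquare]
  ring

variable {A : Matrix ι ι ℝ} {lo hi : ℝ}

lemma posSemidef_sub_smul_one (hA : A.IsHermitian) (h : ∀ v, lo * (v ⬝ᵥ v) ≤ v ⬝ᵥ (A *ᵥ v)) :
    (A - lo • 1).PosSemidef := by
  refine .of_dotProduct_mulVec_nonneg (hA.sub (isHermitian_one.smul (.all lo))) fun v => ?_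
  simpa [sub_mulVec, dotProduct_sub, smul_mulVec] using h v

lemma posSemidef_smul_one_sub (hA : A.IsHermitian) (h : ∀ v, v ⬝ᵥ (A *ᵥ v) ≤ hi * (v ⬝ᵥ v)) :
    (hi • 1 - A).PosSemidef := by
  refine .of_dotProduct_mulVec_nonneg ((isHermitian_one.smul (.all hi)).sub hA) fun v => ?_
  simpa [sub_mulVec, dotProduct_sub, smul_mulVec] using h v

protected lemma PosDef.zpow (hA : A.PosDef) (z : ℤ) : (A ^ z).PosDef :=
  (hA.posSemidef.zpow z).posDef_iff_isUnit.2 <|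
    (isUnit_iff_isUnit_det _).2 ((isUnit_iff_ne_zero.2 hA.det_pos.ne').det_zpow z)

namespace PosDef

variable (hA : A.PosDef) (hlo : ∀ v, lo * (v ⬝ᵥ v) ≤ v ⬝ᵥ (A *ᵥ v))
  (hhi : ∀ v, v ⬝ᵥ (A *ᵥ v) ≤ hi * (v ⬝ᵥ v))
include hA hlo hhi

open scoped MatrixOrder in
lemma dotProduct_zpow_add_one_add_le (q : ℤ) (v : ι → ℝ) :
    v ⬝ᵥ (A ^ (q + 1) *ᵥ v) + hi * lo * (v ⬝ᵥ (A ^ (q - 1) *ᵥ v)) ≤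
      (hi + lo) * (v ⬝ᵥ (A ^ q *ᵥ v)) := by
  have hdet : IsUnit A.det := isUnit_iff_ne_zero.2 hA.det_pos.ne'
  have hprod : 0 ≤ (A - lo • 1) * (hi • 1 - A) :=
    Commute.mul_nonneg (posSemidef_sub_smul_one hA.isHermitian hlo).nonneg
      (posSemidef_smul_one_sub hA.isHermitian hhi).nonneg
      (by apply_rules [Commute.sub_right, Commute.smul_right, Commute.one_right,
        Commute.sub_left, Commute.smul_left, Commute.one_left, Commute.refl])
  have hnonneg := Commute.mul_nonneg (hA.posSemidef.zpow (q - 1)).nonneg hprod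
    (by apply_rules [Commute.zpow_left, Commute.mul_right, Commute.sub_right,
      Commute.smul_right, Commute.one_right, Commute.refl])
  have hexpand : A ^ (q - 1) * ((A - lo • 1) * (hi • 1 - A)) =
      (hi + lo) • A ^ q - A ^ (q + 1) - (hi * lo) • A ^ (q - 1) := by
    rw [zpow_add_one hdet, show q = q - 1 + 1 by ring, zpow_add_one hdet, add_sub_cancel_right]
    simp only [mul_sub, sub_mul, mul_smul_comm, smul_mul_assoc, mul_one, one_mul,
      Matrix.mul_assoc]
    module
  have := (nonneg_iff_posSemidef.1 hnonneg).dotProduct_mulVec_nonneg v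
  simp only [hexpand, sub_mulVec, dotProduct_sub, smul_mulVec, dotProduct_smul, smul_eq_mul,
    star_trivial] at this
  linarith

theorem kantorovich_s10 (q : ℤ) (v : ι → ℝ) :
    4 * hi * lo * (v ⬝ᵥ (A ^ (q - 1) *ᵥ v)) * (v ⬝ᵥ (A ^ (q + 1) *ᵥ v)) ≤
      (hi + lo) ^ 2 * (v ⬝ᵥ (A ^ q *ᵥ v)) ^ 2 := by
  have hlin := hA.dotProduct_zpow_add_one_add_le hlo hhi q v
  have hm := (hA.posSemidef.zpow (q - 1)).dotProduct_mulVec_nonneg v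
  have hp := (hA.posSemidef.zpow (q + 1)).dotProduct_mulVec_nonneg v
  simp only [star_trivial] at hm hp
  rcases le_or_gt (hi * lo) 0 with hneg | hpos
  · nlinarith [mul_nonneg hm hp, sq_nonneg ((hi + lo) * (v ⬝ᵥ (A ^ q *ᵥ v)))]
  · nlinarith [sq_nonneg (v ⬝ᵥ (A ^ (q + 1) *ᵥ v) - hi * lo * (v ⬝ᵥ (A ^ (q - 1) *ᵥ v))),
      mul_nonneg hpos.le hm]

variable {q : ℤ} {W : Matrix ι m ℝ} {g : ι → ℝ} (hg : ∃ c, W *ᵥ c = g) {a : m → ℝ}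
  (ha : (Wᵀ * A ^ (q + 1) * W) *ᵥ a = Wᵀ *ᵥ (A ^ q *ᵥ g))
include hg ha

lemma kantorovich_mul_le_dotProduct_galerkin :
    4 * hi * lo / (hi + lo) ^ 2 * (g ⬝ᵥ (A ^ (q - 1) *ᵥ g)) ≤ (W *ᵥ a) ⬝ᵥ (A ^ q *ᵥ g) := by
  obtain ⟨c, rfl⟩ := hg
  have hS : (W *ᵥ a) ⬝ᵥ (A ^ (q + 1) *ᵥ (W *ᵥ a)) = (W *ᵥ a) ⬝ᵥ (A ^ q *ᵥ (W *ᵥ c)) :=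
    dotProduct_mulVec_of_normal_eq ha a
  have hP : (W *ᵥ c) ⬝ᵥ (A ^ (q + 1) *ᵥ (W *ᵥ a)) = (W *ᵥ c) ⬝ᵥ (A ^ q *ᵥ (W *ᵥ c)) :=
    dotProduct_mulVec_of_normal_eq ha c
  set S := (W *ᵥ a) ⬝ᵥ (A ^ q *ᵥ (W *ᵥ c))
  have hS0 : 0 ≤ S := by
    have := (hA.zpow (q + 1)).posSemidef.dotProduct_mulVec_nonneg (W *ᵥ a)
    rwa [star_trivial, hS] at this
  by_cases hg0 : W *ᵥ c = 0
  · simpa [hg0] using hS0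
  have hQ : 0 < (W *ᵥ c) ⬝ᵥ (A ^ (q + 1) *ᵥ (W *ᵥ c)) := by
    simpa using (hA.zpow (q + 1)).dotProduct_mulVec_pos hg0
  have hcs := (hA.zpow (q + 1)).posSemidef.dotProduct_mulVec_sq_le (W *ᵥ c) (W *ᵥ a)
  have hk := hA.kantorovich_s10 hlo hhi q (W *ᵥ c)
  rw [hP, hS] at hcs
  rcases eq_or_lt_of_le (sq_nonneg (hi + lo)) with h0 | hpos
  · simpa [← h0] using hS0
  rw [div_mul_eq_mul_div, div_le_iff₀ hpos]
  refine le_of_mul_le_mul_right ?_ hQ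
  linarith [mul_le_mul_of_nonneg_left hcs hpos.le]

theorem relaxed_galerkin_step_le {ω : ℝ} (hω0 : 0 ≤ ω) (hω2 : ω ≤ 2) :
    (g - ω • (A *ᵥ (W *ᵥ a))) ⬝ᵥ (A ^ (q - 1) *ᵥ (g - ω • (A *ᵥ (W *ᵥ a)))) ≤
      (1 - ω * (2 - ω) * (4 * hi * lo / (hi + lo) ^ 2)) * (g ⬝ᵥ (A ^ (q - 1) *ᵥ g)) := by
  have hdet : IsUnit A.det := isUnit_iff_ne_zero.2 hA.det_pos.ne'
  have hS := dotProduct_mulVec_of_normal_eq ha a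
  have hlower := hA.kantorovich_mul_le_dotProduct_galerkin hlo hhi hg ha
  rw [dotProduct_zpow_mulVec_sub_smul (isHermitian_iff_isSymm.1 hA.isHermitian) hdet, hS]
  nlinarith [mul_le_mul_of_nonneg_left hlower (mul_nonneg hω0 (sub_nonneg.2 hω2))]

end PosDef

end Matrix

lemma four_mul_div_div_add_one_sq (a b : ℝ) :
    4 * (a / b) / (a / b + 1) ^ 2 = 4 * a * b / (a + b) ^ 2 := by
  rcases eq_or_ne b 0 with rfl | hb
  · simp
  rw [div_add_one hb, div_pow, div_div_eq_mul_div, mul_div_assoc']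
  field_simp

lemma four_mul_mul_div_add_sq_le_one (a b : ℝ) : 4 * a * b / (a + b) ^ 2 ≤ 1 :=
  div_le_one_of_le₀ (by nlinarith [sq_nonneg (a - b)]) (sq_nonneg _)

theorem stmt10_general (n : ℕ) (A : Matrix (Fin n) (Fin n) ℝ) (hA : A.PosDef)
    (b : Fin n → ℝ)
    (lam1 lamn : ℝ)
    (hspec : ∀ v : Fin n → ℝ, lamn * (v ⬝ᵥ v) ≤ v ⬝ᵥ (A *ᵥ v) ∧
      v ⬝ᵥ (A *ᵥ v) ≤ lam1 * (v ⬝ᵥ v))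
    (κ : ℝ) (hκ : κ = lam1 / lamn)
    (p : ℕ) -- p = 2ℓ
    (ω : ℝ) (hω0 : 0 < ω) (hω2 : ω < 2)
    (x : ℕ → Fin n → ℝ)
    (g : ℕ → Fin n → ℝ) (hgdef : ∀ k, g k = A *ᵥ x k - b)
    (mdim : ℕ → ℕ)
    (W : ∀ k : ℕ, Matrix (Fin n) (Fin (mdim k)) ℝ)
    (hWrank : ∀ k, LinearIndependent ℝ (fun j : Fin (mdim k) => (W k)ᵀ j))
    (hgcol : ∀ k, ∃ c : Fin (mdim k) → ℝ, W k *ᵥ c = g k)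
    (a : ∀ k : ℕ, Fin (mdim k) → ℝ)
    (ha : ∀ k, a k = ((W k)ᵀ * A ^ (p + 1) * W k)⁻¹ *ᵥ (((W k)ᵀ * A ^ p) *ᵥ g k))
    (hx : ∀ k, x (k + 1) = x k - ω • (W k *ᵥ a k))
    (c : ℝ) (hc : c = 1 - ω * (2 - ω) * (4 * κ) / (κ + 1) ^ 2) :
    (∀ k, g (k + 1) ⬝ᵥ (A ^ ((p : ℤ) - 1) *ᵥ g (k + 1)) ≤
        c * (g k ⬝ᵥ (A ^ ((p : ℤ) - 1) *ᵥ g k))) ∧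
    (∀ k, g k ⬝ᵥ (A ^ ((p : ℤ) - 1) *ᵥ g k) ≤
        c ^ k * (g 0 ⬝ᵥ (A ^ ((p : ℤ) - 1) *ᵥ g 0))) := by
  have hc' : c = 1 - ω * (2 - ω) * (4 * lam1 * lamn / (lam1 + lamn) ^ 2) := by
    rw [hc, hκ, ← four_mul_div_div_add_one_sq, mul_div_assoc]
  have hstep : ∀ k, g (k + 1) ⬝ᵥ (A ^ ((p : ℤ) - 1) *ᵥ g (k + 1)) ≤
      c * (g k ⬝ᵥ (A ^ ((p : ℤ) - 1) *ᵥ g k)) := by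
    intro k
    have hnormal : ((W k)ᵀ * A ^ ((p : ℤ) + 1) * W k) *ᵥ a k =
        (W k)ᵀ *ᵥ (A ^ (p : ℤ) *ᵥ g k) := by
      rw [ha k, ← mulVec_mulVec (g k), ← zpow_natCast A (p + 1), ← zpow_natCast A p, Nat.cast_succ]
      exact (hA.zpow _).mulVec_normal_eq (mulVec_injective_iff.2 (hWrank k)) _
    have hg : g (k + 1) = g k - ω • (A *ᵥ (W k *ᵥ a k)) := by
      rw [hgdef, hx, mulVec_sub, mulVec_smul, sub_right_comm, ← hgdef]
    rw [hg, hc']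
    exact hA.relaxed_galerkin_step_le (fun v => (hspec v).1) (fun v => (hspec v).2) (hgcol k)
      hnormal hω0.le hω2.le
  have hc0 : 0 ≤ c := by
    have hρ := four_mul_mul_div_add_sq_le_one lam1 lamn
    rw [hc']
    nlinarith [mul_nonneg (mul_nonneg hω0.le (sub_nonneg.2 hω2.le)) (sub_nonneg.2 hρ),
      sq_nonneg (ω - 1)]
  exact ⟨hstep, fun k => le_geom (u := fun k => g k ⬝ᵥ (A ^ ((p : ℤ) - 1) *ᵥ g k)) hc0 k
    fun i _ => hstep i⟩

/-- linear convergence of the flexible scheme: with A SPD with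
spectrum in [λₙ,λ₁], κ = λ₁/λₙ, each W_k of full column rank with g_k ∈ col(W_k),
a_k = (W_kᵀA^{2ℓ+1}W_k)⁻¹W_kᵀA^{2ℓ}g_k, ω ∈ (0,2), x_{k+1} = x_k − ωW_k a_k, the
gradients g_k = Ax_k − b satisfy ‖g_{k+1}‖²_{A^{2ℓ−1}} ≤ c(ω)‖g_k‖²_{A^{2ℓ−1}}
and hence ‖g_k‖²_{A^{2ℓ−1}} ≤ c(ω)^k ‖g_0‖²_{A^{2ℓ−1}}. -/
theorem stmt10 (n : ℕ) (A : Matrix (Fin n) (Fin n) ℝ) (hA : A.PosDef)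
    (b : Fin n → ℝ)
    (lam1 lamn : ℝ) (hlamn : 0 < lamn) (hle : lamn ≤ lam1)
    (hspec : ∀ v : Fin n → ℝ, lamn * (v ⬝ᵥ v) ≤ v ⬝ᵥ (A *ᵥ v) ∧
      v ⬝ᵥ (A *ᵥ v) ≤ lam1 * (v ⬝ᵥ v))
    (κ : ℝ) (hκ : κ = lam1 / lamn)
    (p : ℕ) -- p = 2ℓ
    (ω : ℝ) (hω0 : 0 < ω) (hω2 : ω < 2)
    (x : ℕ → Fin n → ℝ)
    (g : ℕ → Fin n → ℝ) (hgdef : ∀ k, g k = A *ᵥ x k - b)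
    (mdim : ℕ → ℕ)
    (W : ∀ k : ℕ, Matrix (Fin n) (Fin (mdim k)) ℝ)
    (hWrank : ∀ k, LinearIndependent ℝ (fun j : Fin (mdim k) => (W k)ᵀ j))
    (hgcol : ∀ k, ∃ c : Fin (mdim k) → ℝ, W k *ᵥ c = g k)
    (a : ∀ k : ℕ, Fin (mdim k) → ℝ)
    (ha : ∀ k, a k = ((W k)ᵀ * A ^ (p + 1) * W k)⁻¹ *ᵥ (((W k)ᵀ * A ^ p) *ᵥ g k))
    (hx : ∀ k, x (k + 1) = x k - ω • (W k *ᵥ a k))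
    (c : ℝ) (hc : c = 1 - ω * (2 - ω) * (4 * κ) / (κ + 1) ^ 2) :
    (∀ k, g (k + 1) ⬝ᵥ (A ^ ((p : ℤ) - 1) *ᵥ g (k + 1)) ≤
        c * (g k ⬝ᵥ (A ^ ((p : ℤ) - 1) *ᵥ g k))) ∧
    (∀ k, g k ⬝ᵥ (A ^ ((p : ℤ) - 1) *ᵥ g k) ≤
        c ^ k * (g 0 ⬝ᵥ (A ^ ((p : ℤ) - 1) *ᵥ g 0))) :=
  stmt10_general n A hA b lam1 lamn hspec κ hκ p ω hω0 hω2 x g hgdef mdim W hWrank hgcol a ha hx c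
    hc
end
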